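/- arXiv:2501.14425 — 2 statements merged into one kernel-verified Lean document; each statement's English description precedes it below -/
import Mathlib

section
/- Let (ρ_j)_{j∈ℤ} be a bounded real sequence and let s_j = minmod(ρ_j − ρ_{j−1}, ρ_{j+1} − ρ_j). Then for every j, |s_{j+1} − s_j| ≤ |ρ_{j+1} − ρ_j|. -/
noncomputable def minmod (a b : ℝ) : ℝ :=
  if a * b ≤ 0 then 0 else if |a| < |b| then a else b

lemma minmod_between (a b : ℝ) :
    min 0 a ≤ minmod a b ∧ minmod a b ≤ max 0 a ∧
    min 0 b ≤ minmod a b ∧ minmod a b ≤ max 0 b := by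
  unfold minmod
  rcases le_or_gt 0 a with ha | ha <;> rcases le_or_gt 0 b with hb | hb <;>
    split_ifs with h h2 <;>
    refine ⟨?_, ?_, ?_, ?_⟩ <;>
    simp only [min_def, max_def] <;>
    split_ifs <;>
    first
      | rfl
      | linarith
      | (rw [abs_of_nonneg ha, abs_of_nonneg hb] at h2; linarith)
      | (rw [abs_of_nonneg ha, abs_of_nonneg hb] at h2; push_neg at h2; linarith)
      | (rw [abs_of_neg ha, abs_of_neg hb] at h2; linarith)
      | (rw [abs_of_neg ha, abs_of_neg hb] at h2; push_neg at h2; linarith)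
      | nlinarith

theorem minmod_slope_diff (ρ : ℤ → ℝ) (hbd : ∃ M : ℝ, ∀ j, |ρ j| ≤ M)
    (s : ℤ → ℝ) (hs : ∀ j, s j = minmod (ρ j - ρ (j - 1)) (ρ (j + 1) - ρ j)) :
    ∀ j, |s (j + 1) - s j| ≤ |ρ (j + 1) - ρ j| := by
  intro j
  have e1 : (j + 1 : ℤ) - 1 = j := by ring
  have h1 := minmod_between (ρ (j + 1) - ρ (j + 1 - 1)) (ρ (j + 1 + 1) - ρ (j + 1))
  have h2 := minmod_between (ρ j - ρ (j - 1)) (ρ (j + 1) - ρ j)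
  rw [e1] at h1
  rw [hs (j + 1), hs j, e1]
  obtain ⟨a1, a2, -, -⟩ := h1
  obtain ⟨-, -, b1, b2⟩ := h2
  rw [abs_le]
  rcases le_total 0 (ρ (j + 1) - ρ j) with hd | hd <;>
    [rw [abs_of_nonneg hd]; rw [abs_of_nonpos hd]] <;>
    simp only [min_def, max_def] at a1 a2 b1 b2 <;>
    split_ifs at a1 a2 b1 b2 <;>
    constructor <;> linarith
end

section
/- Let (v_{j+1/2})_{j∈ℤ} be real cell averages on a staggered grid, s_{j+1/2} = minmod(v_{j+3/2} − v_{j+1/2}, v_{j+1/2} − v_{j−1/2}), and define the non-staggered averages ρ_j = (v_{j−1/2} + v_{j+1/2})/2 + (s_{j−1/2} − s_{j+1/2})/8. Then Σ_{j∈ℤ} |ρ_{j+1} − ρ_j| ≤ Σ_{j∈ℤ} |v_{j+3/2} − v_{j+1/2}| (whenever the right-hand side is finite). -/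
lemma abs_minmod_le_left (a b : ℝ) : |minmod a b| ≤ |a| := by
  unfold minmod
  split_ifs with h1 h2
  · simp [abs_nonneg a]
  · exact le_refl _
  · exact le_of_not_gt h2

lemma abs_minmod_le_right (a b : ℝ) : |minmod a b| ≤ |b| := by
  unfold minmod
  split_ifs with h1 h2
  · simp [abs_nonneg b]
  · exact le_of_lt h2
  · exact le_refl _

lemma abs_add_add_abs_sub (x e : ℝ) (h : |e| ≤ |x|) : |x + e| + |x - e| = 2 * |x| := by
  rcases le_total 0 x with hx | hx
  · rw [abs_of_nonneg hx] at h
    obtain ⟨h1, h2⟩ := abs_le.mp h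
    rw [abs_of_nonneg hx, abs_of_nonneg (by linarith), abs_of_nonneg (by linarith)]
    ring
  · rw [abs_of_nonpos hx] at h
    obtain ⟨h1, h2⟩ := abs_le.mp h
    rw [abs_of_nonpos hx, abs_of_nonpos (by linarith), abs_of_nonpos (by linarith)]
    ring

set_option maxHeartbeats 1000000 in
theorem reprojection_TVD (v s ρ : ℤ → ℝ)
    (hs : ∀ j, s j = minmod (v (j + 1) - v j) (v j - v (j - 1)))
    (hρ : ∀ j, ρ j = (v (j - 1) + v j) / 2 + (s (j - 1) - s j) / 8)
    (hsum : Summable (fun j : ℤ => |v (j + 1) - v j|)) :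
    Summable (fun j : ℤ => |ρ (j + 1) - ρ j|) ∧
    ∑' j : ℤ, |ρ (j + 1) - ρ j| ≤ ∑' j : ℤ, |v (j + 1) - v j| := by
  set Δ : ℤ → ℝ := fun j => v (j + 1) - v j with hΔ
  set f : ℤ → ℝ := fun j => (|Δ j| + |Δ j + (s (j + 1) - s j) / 2|) / 4 with hf
  set g : ℤ → ℝ := fun j => (|Δ j - (s (j + 1) - s j) / 2| + |Δ j|) / 4 with hg
  -- |s j| ≤ |Δ j| and |s (j+1)| ≤ |Δ j|
  have hsl : ∀ j : ℤ, |s j| ≤ |Δ j| := fun j => by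
    rw [hs j]; exact abs_minmod_le_left _ _
  have hsr : ∀ j : ℤ, |s (j + 1)| ≤ |Δ j| := fun j => by
    have := hs (j + 1)
    rw [show j + 1 - 1 = j by ring] at this
    rw [this]; exact abs_minmod_le_right _ _
  have hfg : ∀ j, f j + g j = |Δ j| := by
    intro j
    have he : |(s (j + 1) - s j) / 2| ≤ |Δ j| := by
      have h1 := hsl j
      have h2 := hsr j
      have := abs_sub (s (j + 1)) (s j)
      rw [abs_div]
      have : |s (j + 1) - s j| ≤ 2 * |Δ j| := by
        calc |s (j + 1) - s j| ≤ |s (j + 1)| + |s j| := abs_sub _ _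
          _ ≤ 2 * |Δ j| := by linarith
      rw [show |(2 : ℝ)| = 2 by norm_num]
      linarith
    have key := abs_add_add_abs_sub (Δ j) ((s (j + 1) - s j) / 2) he
    simp only [hf, hg]
    linarith
  have hkey : ∀ j : ℤ, |ρ (j + 1) - ρ j| ≤ f (j - 1) + g j := by
    intro j
    have hj1 : (j : ℤ) - 1 + 1 = j := by ring
    have hj2 : (j : ℤ) + 1 - 1 = j := by ring
    set A : ℝ := Δ (j - 1) with hA
    set B : ℝ := Δ (j - 1) + (s j - s (j - 1)) / 2 with hB
    set C : ℝ := Δ j - (s (j + 1) - s j) / 2 with hC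
    set D : ℝ := Δ j with hD
    have e1 : ρ (j + 1) - ρ j = (A + B + C + D) / 4 := by
      rw [hρ (j + 1), hρ j, hA, hB, hC, hD, hΔ]
      simp only [hj1, hj2]
      ring
    have e2 : f (j - 1) + g j = (|A| + |B| + |C| + |D|) / 4 := by
      simp only [hf, hg, hA, hB, hC, hD, hj1]
      ring
    rw [e1, e2, abs_div, show |(4 : ℝ)| = 4 by norm_num]
    have h1 := abs_add_le (A + B + C) D
    have h2 := abs_add_le (A + B) C
    have h3 := abs_add_le A B
    linarith
  have hfnn : ∀ j, 0 ≤ f j := fun j => by positivity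
  have hgnn : ∀ j, 0 ≤ g j := fun j => by positivity
  have hfle : ∀ j, f j ≤ |Δ j| := fun j => by have := hfg j; have := hgnn j; linarith
  have hgle : ∀ j, g j ≤ |Δ j| := fun j => by have := hfg j; have := hfnn j; linarith
  have hsumf : Summable f := Summable.of_nonneg_of_le hfnn hfle hsum
  have hsumg : Summable g := Summable.of_nonneg_of_le hgnn hgle hsum
  have hsumf' : Summable (fun j : ℤ => f (j - 1)) :=
    (Equiv.subRight (1 : ℤ)).summable_iff.mpr hsumf
  have hsumtot : Summable (fun j : ℤ => f (j - 1) + g j) := hsumf'.add hsumg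
  have hρsum : Summable (fun j : ℤ => |ρ (j + 1) - ρ j|) :=
    Summable.of_nonneg_of_le (fun j => abs_nonneg _) hkey hsumtot
  refine ⟨hρsum, ?_⟩
  have hshift : ∑' j : ℤ, f (j - 1) = ∑' j : ℤ, f j :=
    (Equiv.subRight (1 : ℤ)).tsum_eq f
  calc ∑' j : ℤ, |ρ (j + 1) - ρ j| ≤ ∑' j : ℤ, (f (j - 1) + g j) :=
        Summable.tsum_le_tsum hkey hρsum hsumtot
    _ = (∑' j : ℤ, f (j - 1)) + ∑' j : ℤ, g j := Summable.tsum_add hsumf' hsumg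
    _ = (∑' j : ℤ, f j) + ∑' j : ℤ, g j := by rw [hshift]
    _ = ∑' j : ℤ, (f j + g j) := (Summable.tsum_add hsumf hsumg).symm
    _ = ∑' j : ℤ, |Δ j| := tsum_congr hfg
end
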